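/- Let f₁ and f₂ be multiplicative functions ℕ → ℂ such that, for j = 1,2, f_j satisfies with respect to an integer m_j ≥ 1 the conditions: (i) for some prime q dividing m_j, ∑_{k=0}^∞ f_j(q^k)/q^k = 0; (ii) for each prime power p^a exactly dividing m_j, f_j(p^k) = f_j(p^a) for all k ≥ a; (iii) for each prime p with gcd(p,m_j) = 1, f_j(p^k) = 1 for all k ≥ 1. Let f = f₁ ∗ f₂ be the Dirichlet convolution. Then there exists a constant d > 0 such that ∑_{n≤x} f(n) = Ω(exp(d·log x / log log x)), i.e. limsup_{x→∞} |∑_{n≤x} f(n)| / exp(d·log x / log log x) > 0. -/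

import Mathlib

/-!
At every prime `p ∤ m₁ m₂` condition (iii) gives `f₁ p = f₂ p = 1`, so `f = f₁ ∗ f₂` satisfies
`f p = 2`, and by multiplicativity `f n = 2 ^ k` when `n` is the product of the `k` primes up to
`N` not dividing `m₁ m₂`. The partial sums jump by `2 ^ k` at `n`, so one of them, at `n - 1` or
at `n`, has size at least `2 ^ (k - 1)`. Chebyshev's bounds give `k ≫ N / log N` and
`log n ≤ N log 4`, which makes `2 ^ k ≥ exp (log x / (4 log log x))` for `x ∈ {n - 1, n}`.
-/

open Filter

/-- `f` is multiplicative: `f 1 = 1` and `f (m*n) = f m * f n` for coprime `m, n`. -/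
def IsMultiplicativeFn (f : ℕ → ℂ) : Prop :=
  f 1 = 1 ∧ ∀ m n : ℕ, Nat.Coprime m n → f (m * n) = f m * f n

/-- Conditions i-iii of Theorem 2 with respect to the integer `m`. -/
def SatisfiesConds (f : ℕ → ℂ) (m : ℕ) : Prop :=
  (∃ q : ℕ, q.Prime ∧ q ∣ m ∧ ∑' k : ℕ, f (q ^ k) / (q : ℂ) ^ k = 0) ∧
  (∀ p a : ℕ, p.Prime → p ^ a ∣ m → ¬ p ^ (a + 1) ∣ m →
    ∀ k : ℕ, a ≤ k → f (p ^ k) = f (p ^ a)) ∧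
  (∀ p : ℕ, p.Prime → Nat.Coprime p m → ∀ k : ℕ, 1 ≤ k → f (p ^ k) = 1)

/-- Dirichlet convolution. -/
noncomputable def dconv (f g : ℕ → ℂ) : ℕ → ℂ :=
  fun n => ∑ d ∈ n.divisors, f d * g (n / d)

open Finset Real
open scoped LSeries.notation

lemma toArithmeticFunction_apply_of_ne_zero {R : Type*} [Zero R] (f : ℕ → R) {n : ℕ}
    (hn : n ≠ 0) :
    toArithmeticFunction f n = f n := by
  simp [toArithmeticFunction, hn]

lemma IsMultiplicativeFn.isMultiplicative_toArithmeticFunction {f : ℕ → ℂ}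
    (hf : IsMultiplicativeFn f) : (toArithmeticFunction f).IsMultiplicative := by
  refine ArithmeticFunction.IsMultiplicative.iff_ne_zero.2
    ⟨by rw [toArithmeticFunction_apply_of_ne_zero f one_ne_zero, hf.1], fun hm hn hmn => ?_⟩
  rw [toArithmeticFunction_apply_of_ne_zero f hm, toArithmeticFunction_apply_of_ne_zero f hn,
    toArithmeticFunction_apply_of_ne_zero f (mul_ne_zero hm hn), hf.2 _ _ hmn]

lemma dconv_eq_convolution (f g : ℕ → ℂ) : dconv f g = f ⍟ g := by
  ext n
  rw [LSeries.convolution_def]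
  exact (Nat.sum_divisorsAntidiagonal fun i j => f i * g j).symm

lemma dconv_prime {f g : ℕ → ℂ} {p : ℕ} (hp : p.Prime) :
    dconv f g p = f 1 * g p + f p * g 1 := by
  rw [dconv, hp.divisors, sum_pair hp.one_lt.ne, Nat.div_one, Nat.div_self hp.pos]

lemma dconv_prod_primes {f g : ℕ → ℂ} (hf : IsMultiplicativeFn f) (hg : IsMultiplicativeFn g)
    {P : Finset ℕ} (hP : ∀ p ∈ P, p.Prime ∧ f p = 1 ∧ g p = 1) :
    dconv f g (∏ p ∈ P, p) = 2 ^ #P := by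
  have hprime : ∀ p ∈ P, p.Prime := fun p hp => (hP p hp).1
  have hmul :=
    hf.isMultiplicative_toArithmeticFunction.mul hg.isMultiplicative_toArithmeticFunction
  rw [dconv_eq_convolution, LSeries.convolution, hmul.map_prod_of_prime P hprime, ← prod_const]
  refine prod_congr rfl fun p hp => ?_
  obtain ⟨hp, hfp, hgp⟩ := hP p hp
  rw [← LSeries.convolution, ← dconv_eq_convolution, dconv_prime hp, hf.1, hg.1, hfp, hgp]
  norm_num

lemma SatisfiesConds.apply_prime_of_not_dvd {f : ℕ → ℂ} {m p : ℕ} (h : SatisfiesConds f m)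
    (hp : p.Prime) (hpm : ¬ p ∣ m) : f p = 1 := by
  simpa using h.2.2 p hp (hp.coprime_iff_not_dvd.2 hpm) 1 le_rfl

lemma exists_norm_sum_Icc_ge {E : Type*} [SeminormedAddCommGroup E] (F : ℕ → E) {n : ℕ}
    (hn : 1 ≤ n) : ∃ y, n - 1 ≤ y ∧ y ≤ n ∧ ‖F n‖ / 2 ≤ ‖∑ i ∈ Icc 1 y, F i‖ := by
  have hsplit : ∑ i ∈ Icc 1 n, F i = ∑ i ∈ Icc 1 (n - 1), F i + F n := by
    obtain ⟨n, rfl⟩ := Nat.exists_eq_add_of_le' hn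
    rw [Nat.add_sub_cancel, sum_Icc_succ_top (Nat.le_add_left 1 n)]
  have hjump : ‖F n‖ ≤ ‖∑ i ∈ Icc 1 n, F i‖ + ‖∑ i ∈ Icc 1 (n - 1), F i‖ := by
    rw [hsplit]
    exact (norm_sub_le _ _).trans_eq' (by rw [add_sub_cancel_left])
  by_cases hlarge : ‖F n‖ / 2 ≤ ‖∑ i ∈ Icc 1 n, F i‖
  · exact ⟨n, Nat.sub_le n 1, le_rfl, hlarge⟩
  · exact ⟨n - 1, le_rfl, Nat.sub_le n 1, by linarith⟩

lemma monotoneOn_log_div_log_log :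
    MonotoneOn (fun x => log x / log (log x)) (Set.Ici (exp (exp 1))) := by
  intro x hx y hy hxy
  have hlog : ∀ {z : ℝ}, exp (exp 1) ≤ z → exp 1 ≤ log z := fun hz =>
    (le_log_iff_exp_le ((exp_pos _).trans_le hz)).2 hz
  have hlogx := hlog hx
  have hlogy := hlog hy
  have hlogxy : log x ≤ log y := log_le_log ((exp_pos _).trans_le hx) hxy
  have hpos : 0 < log (log y) / log y :=
    div_pos (log_pos ((one_lt_exp_iff.2 one_pos).trans_le hlogy)) ((exp_pos 1).trans_le hlogy)
  simp only [← inv_div (log (log _))]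
  exact inv_anti₀ hpos (log_div_self_antitoneOn hlogx hlogy hlogxy)

lemma log_div_log_log_le {x : ℝ} {N : ℕ} (hx : exp (exp 1) ≤ x) (hxN : x ≤ 4 ^ N)
    (hN : 2 ≤ N) :
    log x / log (log x) ≤ log 4 * N / log N := by
  have hN1 : (1 : ℝ) < N := by exact_mod_cast hN
  have hlog4 : 1 < log 4 := by
    rw [lt_log_iff_exp_lt (by norm_num)]
    linarith [exp_one_lt_d9]
  calc log x / log (log x) ≤ log (4 ^ N) / log (log (4 ^ N)) :=
        monotoneOn_log_div_log_log hx (hx.trans hxN) hxN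
    _ = log 4 * N / log (log 4 * N) := by rw [log_pow, mul_comm]
    _ ≤ log 4 * N / log N :=
        div_le_div_of_nonneg_left (by positivity) (log_pos hN1)
          (log_le_log (by positivity) (le_mul_of_one_le_left (by positivity) hlog4.le))

lemma exp_log_div_log_log_le_two_pow {x : ℝ} {N k : ℕ} (hx : exp (exp 1) ≤ x)
    (hxN : x ≤ 4 ^ N) (hN : 2 ≤ N) (hk : N / (2 * log N) ≤ k) :
    exp (1 / 4 * log x / log (log x)) ≤ 2 ^ k := by
  have hlog4 : log 4 = 2 * log 2 := by
    rw [show (4 : ℝ) = 2 ^ 2 by norm_num, log_pow, Nat.cast_ofNat]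
  rw [← exp_log (two_pos (α := ℝ)), ← exp_nat_mul, exp_le_exp, mul_div_assoc]
  calc 1 / 4 * (log x / log (log x)) ≤ 1 / 4 * (log 4 * N / log N) :=
        mul_le_mul_of_nonneg_left (log_div_log_log_le hx hxN hN) (by norm_num)
    _ = log 2 * (N / (2 * log N)) := by rw [hlog4]; ring
    _ ≤ k * log 2 := by rw [mul_comm]; gcongr

lemma eventually_div_two_mul_log_add_le_primeCounting (w : ℝ) :
    ∀ᶠ N : ℕ in atTop, N / (2 * log N) + w ≤ N.primeCounting := by
  have hc : 0 < log 2 - 1 / 2 := by linarith [log_two_gt_d9]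
  have hlittle : ∀ᶠ N : ℕ in atTop, (|w| + 2) * log N ≤ (log 2 - 1 / 2) * N := by
    have hbound := isLittleO_log_id_atTop.bound (div_pos hc (by positivity : (0 : ℝ) < |w| + 2))
    filter_upwards [tendsto_natCast_atTop_atTop.eventually hbound, eventually_ge_atTop 1]
      with N hN hN1
    have hlogN : 0 ≤ log N := log_nonneg (by exact_mod_cast hN1)
    rw [norm_of_nonneg hlogN, id, norm_natCast, div_mul_eq_mul_div, le_div_iff₀ (by positivity)]
      at hN
    linarith
  filter_upwards [hlittle, eventually_ge_atTop 2] with N hN hN2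
  have hN1 : (1 : ℝ) < N := by exact_mod_cast hN2
  have hlogN : 0 < log N := log_pos hN1
  have hlog1 : log (N + 1) ≤ 2 * log N := by
    have hN2' : (2 : ℝ) ≤ N := by exact_mod_cast hN2
    have : log (N + 1) ≤ log (N ^ 2) := log_le_log (by positivity) (by nlinarith)
    rwa [log_pow, Nat.cast_ofNat] at this
  have hw : w * log N ≤ |w| * log N := mul_le_mul_of_nonneg_right (le_abs_self w) hlogN.le
  calc N / (2 * log N) + w = (N / 2 + w * log N) / log N := by field_simp
    _ ≤ (N * log 2 - log (N + 1)) / log N := by gcongr; linarith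
    _ ≤ N.primeCounting := Chebyshev.pi_ge N

theorem frequently_exp_log_div_log_log_le_norm_sum {E : Type*} [SeminormedAddCommGroup E]
    (F : ℕ → E) (s : Finset ℕ)
    (hF : ∀ P : Finset ℕ, (∀ p ∈ P, p.Prime) → Disjoint P s → 2 ^ #P ≤ ‖F (∏ p ∈ P, p)‖) :
    ∃ᶠ x : ℝ in atTop,
      1 / 2 * exp (1 / 4 * log x / log (log x)) ≤ ‖∑ n ∈ Icc 1 ⌊x⌋₊, F n‖ := by
  refine frequently_atTop.2 fun X => ?_
  obtain ⟨N, hN2, hπ, hπX⟩ := ((eventually_ge_atTop 2).and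
    ((eventually_div_two_mul_log_add_le_primeCounting #s).and
      (Nat.tendsto_primeCounting.eventually_ge_atTop (⌈max X (exp (exp 1))⌉₊ + #s)))).exists
  set P := Nat.primesLE N \ s
  have hπP : N.primeCounting ≤ #P + #s := by
    rw [← Nat.primesLE_card_eq_primeCounting]
    exact card_le_card_sdiff_add_card
  have hk : N / (2 * log N) ≤ #P := by
    have : (N.primeCounting : ℝ) ≤ #P + #s := by exact_mod_cast hπP
    linarith
  have hkX : max X (exp (exp 1)) ≤ #P := Nat.ceil_le.1 (by omega)
  have hPprime : ∀ p ∈ P, p.Prime := fun p hp => Nat.prime_of_mem_primesLE (mem_sdiff.1 hp).1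
  have hn_le : ∏ p ∈ P, p ≤ 4 ^ N :=
    (prod_le_prod_of_subset_of_one_le' sdiff_subset fun p hp _ =>
      (Nat.one_lt_of_mem_primesLE hp).le).trans (primorial_le_four_pow N)
  have hn_ge : 2 ^ #P ≤ ∏ p ∈ P, p := pow_card_le_prod _ _ _ fun p hp => (hPprime p hp).two_le
  obtain ⟨y, hy1, hyn, hy⟩ :=
    exists_norm_sum_Icc_ge F (n := ∏ p ∈ P, p) (Nat.one_le_two_pow.trans hn_ge)
  have hPy : (#P : ℝ) ≤ y := by
    have := Nat.lt_two_pow_self (n := #P)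
    exact_mod_cast (show #P ≤ y by omega)
  refine ⟨y, (le_max_left _ _).trans (hkX.trans hPy), ?_⟩
  rw [Nat.floor_natCast]
  have hyN : (y : ℝ) ≤ 4 ^ N := by exact_mod_cast hyn.trans hn_le
  calc 1 / 2 * exp (1 / 4 * log y / log (log y)) ≤ 1 / 2 * 2 ^ #P := by
        gcongr
        exact exp_log_div_log_log_le_two_pow
          ((le_max_right _ _).trans (hkX.trans hPy)) hyN hN2 hk
    _ ≤ ‖F (∏ p ∈ P, p)‖ / 2 := by linarith [hF P hPprime sdiff_disjoint]
    _ ≤ _ := hy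

theorem stmt_3 (f₁ f₂ : ℕ → ℂ) (m₁ m₂ : ℕ) (hm₁ : 1 ≤ m₁) (hm₂ : 1 ≤ m₂)
    (hmul₁ : IsMultiplicativeFn f₁) (hmul₂ : IsMultiplicativeFn f₂)
    (h₁ : SatisfiesConds f₁ m₁) (h₂ : SatisfiesConds f₂ m₂) :
    ∃ d : ℝ, 0 < d ∧ ∃ c : ℝ, 0 < c ∧
      ∃ᶠ x : ℝ in atTop,
        c * Real.exp (d * Real.log x / Real.log (Real.log x)) ≤
          ‖∑ n ∈ Finset.Icc 1 ⌊x⌋₊, dconv f₁ f₂ n‖ := by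
  have hm : m₁ * m₂ ≠ 0 := mul_ne_zero (by omega) (by omega)
  refine ⟨1 / 4, by norm_num, 1 / 2, by norm_num,
    frequently_exp_log_div_log_log_le_norm_sum _ (m₁ * m₂).primeFactors fun P hP hdisj => ?_⟩
  have hfP : ∀ p ∈ P, p.Prime ∧ f₁ p = 1 ∧ f₂ p = 1 := fun p hp => by
    have hpm : ¬ p ∣ m₁ * m₂ := fun h =>
      disjoint_left.1 hdisj hp (Nat.mem_primeFactors.2 ⟨hP p hp, h, hm⟩)
    exact ⟨hP p hp, h₁.apply_prime_of_not_dvd (hP p hp) fun h => hpm (h.mul_right _),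
      h₂.apply_prime_of_not_dvd (hP p hp) fun h => hpm (h.mul_left _)⟩
  simp [dconv_prod_primes hmul₁ hmul₂ hfP]
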